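/- Let A be a nonnegative tensor of order m and dimension n, and suppose j₁ → j₂ → ⋯ → j_t is a walk in M(A), i.e., M(A)_{j_{k+1} j_k} > 0 for all 1 ≤ k ≤ t−1, with t > 1. Then M(A^{t−1})_{j_t j₁} > 0. -/

import Mathlib

open Finset

/- An order-`m` dimension-`n` nonnegative tensor is encoded as
`A : Fin n → (Fin (m-1) → Fin n) → ℝ`, with `A i t = a_{i t₁ ⋯ t_{m-1}}`. -/

/-- The majorization matrix `M(A)_{ij} = a_{ij⋯j}`. -/
def maj (n m : ℕ) (A : Fin n → (Fin (m-1) → Fin n) → ℝ) :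
    Matrix (Fin n) (Fin n) ℝ :=
  fun i j => A i (fun _ => j)

/-- The majorization matrices of the Shao-product powers of `A`:
`majPow n m A k = M(A^k)`, via the recursion
`M(A^{k+1})_{uj} = Σ_{j₂,…,j_m} a_{u j₂ ⋯ j_m} M(A^k)_{j₂ j} ⋯ M(A^k)_{j_m j}`
(with `M(A^0)` the identity, so that `majPow n m A 1 = maj n m A`). -/
def majPow (n m : ℕ) (A : Fin n → (Fin (m-1) → Fin n) → ℝ) :
    ℕ → Matrix (Fin n) (Fin n) ℝ
  | 0 => 1
  | k + 1 => fun u j =>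
      ∑ t : Fin (m-1) → Fin n, A u t * ∏ i, majPow n m A k (t i) j

/-- `A` is primitive: `M(A^r) > 0` entrywise for some positive `r`. -/
def Primitive (n m : ℕ) (A : Fin n → (Fin (m-1) → Fin n) → ℝ) : Prop :=
  ∃ r, 0 < r ∧ ∀ u j, 0 < majPow n m A r u j

/-
A walk `j₀ → j₁ → ⋯ → j_s` in `M(A)` is followed one step at a time: in the sum defining
`M(A^{k+1})_{u j}` the term with all indices equal to `v` is `M(A)_{u v} · M(A^k)_{v j}^{m-1}`,
and since every term is nonnegative, positivity of that one term is enough.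
-/

section

variable {n m : ℕ} {A : Fin n → (Fin (m-1) → Fin n) → ℝ}

lemma majPow_nonneg (hA : ∀ u t, 0 ≤ A u t) (k : ℕ) (u j : Fin n) :
    0 ≤ majPow n m A k u j := by
  induction k generalizing u with
  | zero => simp only [majPow, Matrix.one_apply]; split <;> norm_num
  | succ k ih =>
    exact sum_nonneg fun t _ => mul_nonneg (hA u t) (prod_nonneg fun i _ => ih (t i))

lemma majPow_succ_pos_of_maj_pos (hA : ∀ u t, 0 ≤ A u t) {k : ℕ} {u v j : Fin n}
    (huv : 0 < maj n m A u v) (hvj : 0 < majPow n m A k v j) :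
    0 < majPow n m A (k + 1) u j :=
  sum_pos' (fun t _ => mul_nonneg (hA u t) (prod_nonneg fun i _ => majPow_nonneg hA k (t i) j))
    ⟨fun _ => v, mem_univ _, mul_pos huv (prod_pos fun _ _ => hvj)⟩

lemma majPow_pos_of_walk (hA : ∀ u t, 0 ≤ A u t) (j : ℕ → Fin n) (s : ℕ)
    (hwalk : ∀ k < s, 0 < maj n m A (j (k + 1)) (j k)) :
    0 < majPow n m A s (j s) (j 0) := by
  induction s with
  | zero => simp [majPow]
  | succ s ih =>
    exact majPow_succ_pos_of_maj_pos hA (hwalk s s.lt_succ_self)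
      (ih fun k hk => hwalk k (hk.trans s.lt_succ_self))

end

theorem stmt_9_general (n m : ℕ)
    (A : Fin n → (Fin (m-1) → Fin n) → ℝ) (hA : ∀ u t, 0 ≤ A u t)
    (t : ℕ) (j : ℕ → Fin n)
    (hwalk : ∀ k : ℕ, k < t - 1 → 0 < maj n m A (j (k + 1)) (j k)) :
    0 < majPow n m A (t - 1) (j (t - 1)) (j 0) :=
  majPow_pos_of_walk hA j (t - 1) hwalk

/-- a walk of length `t-1` in `M(A)` yields `M(A^{t-1})_{j_t j₁} > 0`. -/
theorem stmt_9 (n m : ℕ) (hm : 2 ≤ m)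
    (A : Fin n → (Fin (m-1) → Fin n) → ℝ) (hA : ∀ u t, 0 ≤ A u t)
    (t : ℕ) (ht : 1 < t) (j : ℕ → Fin n)
    (hwalk : ∀ k : ℕ, k < t - 1 → 0 < maj n m A (j (k + 1)) (j k)) :
    0 < majPow n m A (t - 1) (j (t - 1)) (j 0) :=
  stmt_9_general n m A hA t j hwalk
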